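/- Let B ⊂ End(V) be a (possibly non-unital) subalgebra of endomorphisms of a finite-dimensional complex vector space V, closed under multiplication, such that Tr(b) = 0 for all b ∈ B and Tr(b₁b₂···b_k) = 0 for all products of elements of B. Then every element of B is nilpotent, and B is simultaneously strictly upper triangularizable. -/

import Mathlib

/-!
If `x ∈ B` then every power `x ^ (k + 1)` lies in `B`, so all power traces of `x` vanish. Writing
`d μ` for the dimension of the generalized eigenspace of `x` for `μ`, these traces are
`∑ μ, d μ * μ ^ (k + 1)`, and invertibility of the Vandermonde matrix forces `d μ * μ = 0`, i.e.
`x` has no nonzero eigenvalue: `x` is nilpotent.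

Commutators of elements of `B` lie in `B`, so `B` is a Lie algebra acting on `V` by nilpotent
endomorphisms, and Engel's theorem makes `V` a nilpotent Lie module. The vectors killed by all of `B`
then form a nonzero submodule `W`, and a basis of `W` followed by lifts of a triangularizing basis
of `V ⧸ W` (found by induction on the dimension) triangularizes `B`.
-/

open Module Set

theorem LinearMap.trace_pow_eq_of_isNilpotent_sub_algebraMap {R M : Type*} [CommRing R]
    [IsReduced R] [AddCommGroup M] [Module R M] [Module.Free R M] [Module.Finite R M]
    {f : End R M} {μ : R} (hf : IsNilpotent (f - algebraMap R _ μ)) (k : ℕ) :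
    trace R M (f ^ k) = finrank R M * μ ^ k := by
  induction k with
  | zero => simp
  | succ k ih =>
    rw [pow_succ, End.mul_eq_comp,
      trace_comp_eq_mul_of_commute_of_isNilpotent μ ((Commute.refl f).pow_left k) hf, ih]
    ring

theorem Finset.eq_zero_of_forall_sum_mul_pow_eq_zero {R : Type*} [CommRing R] [IsDomain R]
    {s : Finset R} {v : R → R} (h : ∀ k : ℕ, ∑ x ∈ s, v x * x ^ k = 0) : ∀ x ∈ s, v x = 0 := by
  let e := s.equivFin
  have hv := Matrix.eq_zero_of_forall_pow_sum_mul_pow_eq_zero (f := fun i => (e.symm i : R))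
    (v := fun i => v (e.symm i)) (Subtype.val_injective.comp e.symm.injective) fun k => by
      rw [e.symm.sum_comp (fun x : s => v x * (x : R) ^ (k : ℕ))]
      exact (Finset.sum_coe_sort s _).trans (h k)
  intro x hx
  simpa using congrFun hv (e ⟨x, hx⟩)

theorem MulMemClass.pow_succ_mem {M A : Type*} [Monoid M] [SetLike A M] [MulMemClass A M] {S : A}
    {x : M} (hx : x ∈ S) (k : ℕ) : x ^ (k + 1) ∈ S := by
  induction k with
  | zero => simpa using hx
  | succ k ih => exact pow_succ x (k + 1) ▸ mul_mem ih hx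

namespace Module.End

variable {K V : Type*} [Field K] [AddCommGroup V] [Module K V] [FiniteDimensional K V]

theorem trace_restrict_pow_maxGenEigenspace (f : End K V) (μ : K) (k : ℕ)
    (h : MapsTo (f ^ k) (f.maxGenEigenspace μ) (f.maxGenEigenspace μ)) :
    LinearMap.trace K _ ((f ^ k).restrict h) = finrank K (f.maxGenEigenspace μ) * μ ^ k := by
  rw [← pow_restrict k (f.mapsTo_maxGenEigenspace_of_comm (Commute.refl f) μ) h]
  exact LinearMap.trace_pow_eq_of_isNilpotent_sub_algebraMap
    (f.isNilpotent_restrict_maxGenEigenspace_sub_algebraMap μ) k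

theorem isNilpotent_of_forall_trace_pow_succ_eq_zero [IsAlgClosed K] [CharZero K] {f : End K V}
    (h : ∀ k : ℕ, LinearMap.trace K V (f ^ (k + 1)) = 0) : IsNilpotent f := by
  classical
  have hds : DirectSum.IsInternal f.maxGenEigenspace :=
    DirectSum.isInternal_submodule_of_iSupIndep_of_iSup_eq_top f.independent_maxGenEigenspace
      f.iSup_maxGenEigenspace_eq_top
  have hfin : {μ | f.maxGenEigenspace μ ≠ ⊥}.Finite :=
    WellFoundedGT.finite_ne_bot_of_iSupIndep f.independent_maxGenEigenspace
  have hmaps (k : ℕ) (μ : K) := f.mapsTo_maxGenEigenspace_of_comm ((Commute.refl f).pow_right k) μ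
  have hsum (k : ℕ) :
      ∑ μ ∈ hfin.toFinset, (finrank K (f.maxGenEigenspace μ) * μ) * μ ^ k = 0 := by
    rw [← h k, LinearMap.trace_eq_sum_trace_restrict' hds hfin (hmaps (k + 1))]
    refine Finset.sum_congr rfl fun μ _ => ?_
    rw [trace_restrict_pow_maxGenEigenspace, pow_succ']
    ring
  have hbot (μ : K) (hμ : μ ≠ 0) : f.maxGenEigenspace μ = ⊥ := by
    by_contra hne
    have h0 := Finset.eq_zero_of_forall_sum_mul_pow_eq_zero hsum μ (hfin.mem_toFinset.mpr hne)
    rw [mul_eq_zero, Nat.cast_eq_zero, Submodule.finrank_eq_zero] at h0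
    exact h0.elim hne hμ
  have htop : f.maxGenEigenspace 0 = ⊤ := by
    refine top_le_iff.mp (f.iSup_maxGenEigenspace_eq_top ▸ iSup_le fun μ => ?_)
    rcases eq_or_ne μ 0 with rfl | hμ
    · exact le_rfl
    · simp [hbot μ hμ]
  rw [LinearMap.isNilpotent_iff_charpoly, LinearMap.charpoly_eq_X_pow_iff]
  intro m
  simpa [mem_maxGenEigenspace] using htop.ge (Submodule.mem_top (x := m))

end Module.End

theorem Module.Basis.toMatrix_eq_zero_of_mem_span_Iio {R M ι : Type*} [CommRing R]
    [AddCommGroup M] [Module R M] [Fintype ι] [DecidableEq ι] [LinearOrder ι] (b : Basis ι R M)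
    {f : End R M} (hf : ∀ j, f (b j) ∈ Submodule.span R (b '' Iio j)) {i j : ι} (hij : j ≤ i) :
    LinearMap.toMatrix b b f i j = 0 := by
  rw [LinearMap.toMatrix_apply]
  exact Finsupp.notMem_support_iff.mp fun hi => not_lt.mpr hij (b.mem_span_image.mp (hf j) hi)

theorem Module.Basis.mem_span_sumQuot_of_mkQ_mem {R V m n : Type*} [CommRing R] [AddCommGroup V]
    [Module R V] {W : Submodule R V} (bW : Basis m R W) (bQ : Basis n R (V ⧸ W)) {s : Set n}
    {v : V} (hv : W.mkQ v ∈ Submodule.span R (bQ '' s)) :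
    v ∈ Submodule.span R (bW.sumQuot bQ '' (range Sum.inl ∪ Sum.inr '' s)) := by
  have hW : Submodule.span R (bW.sumQuot bQ '' range Sum.inl) = W := by
    rw [← range_comp, show bW.sumQuot bQ ∘ Sum.inl = W.subtype ∘ bW by ext; simp, range_comp,
      Submodule.span_image, bW.span_eq, Submodule.map_subtype_top]
  have hQ : W.mkQ '' (bW.sumQuot bQ '' (Sum.inr '' s)) = bQ '' s := by
    rw [image_image, image_image]
    exact image_congr fun i _ => sumQuot_inr bW bQ i
  rw [image_union, Submodule.span_union, hW, ← Submodule.comap_map_mkQ, Submodule.map_span, hQ]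
  exact hv

namespace LieModule

variable {K L M : Type*} [Field K] [LieRing L] [LieAlgebra K L] [AddCommGroup M] [Module K M]
  [LieRingModule L M] [LieModule K L M]

instance isNilpotent_quotient [IsNilpotent L M] (N : LieSubmodule K L M) :
    IsNilpotent L (M ⧸ N) :=
  Function.surjective_id.lieModuleIsNilpotent (f := LieHom.id) (fun _ _ => rfl)
    (LieSubmodule.Quotient.surjective_mk' N)

theorem finrank_quotient_maxTrivSubmodule_lt [FiniteDimensional K M] [Nontrivial M]
    [IsNilpotent L M] : finrank K (M ⧸ maxTrivSubmodule K L M) < finrank K M := by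
  have := nontrivial_max_triv_of_isNilpotent K L M
  rw [← (maxTrivSubmodule K L M : Submodule K M).finrank_quotient_add_finrank]
  exact Nat.lt_add_of_pos_right finrank_pos

variable (M) in
theorem exists_basis_lie_mem_span_Iio [FiniteDimensional K M] [IsNilpotent L M] :
    ∃ n, ∃ b : Basis (Fin n) K M, ∀ (x : L) (j : Fin n),
      ⁅x, b j⁆ ∈ Submodule.span K (b '' Iio j) := by
  induction hd : finrank K M using Nat.strong_induction_on generalizing M with
  | _ d ih =>
    rcases subsingleton_or_nontrivial M with hM | hM
    · exact ⟨0, Basis.empty M, fun _ j => j.elim0⟩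
    let W := maxTrivSubmodule K L M
    obtain ⟨n, bQ, hbQ⟩ := ih _ (hd ▸ finrank_quotient_maxTrivSubmodule_lt) (M ⧸ W) rfl
    let bW := finBasis K W
    let b := (bW.sumQuot (W := (W : Submodule K M)) bQ).reindex finSumFinEquiv
    refine ⟨_, b, fun x j => ?_⟩
    induction j using Fin.addCases with
    | left i =>
      have : ⁅x, b (Fin.castAdd n i)⁆ = 0 := by simpa [b] using (bW i).2 x
      simp [this]
    | right k =>
      have hmk : (W : Submodule K M).mkQ ⁅x, b (Fin.natAdd _ k)⁆ ∈
          Submodule.span K (bQ '' Iio k) := by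
        have hb : b (Fin.natAdd _ k) = bW.sumQuot bQ (Sum.inr k) := by simp [b]
        change ⁅x, (LieSubmodule.Quotient.mk' W _ : M ⧸ W)⁆ ∈ _
        rw [hb, LieSubmodule.Quotient.mk'_apply,
          show LieSubmodule.Quotient.mk _ = bQ k from Basis.sumQuot_inr bW bQ k]
        exact hbQ x k
      refine Submodule.span_mono ?_ (bW.mem_span_sumQuot_of_mkQ_mem bQ hmk)
      rintro _ ⟨i, hi, rfl⟩
      refine ⟨finSumFinEquiv i, ?_, by simp [b]⟩
      rcases hi with ⟨i, rfl⟩ | ⟨i, hi, rfl⟩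
      · simp [Fin.lt_def]
        omega
      · simpa using hi

end LieModule

section

attribute [local instance] LieRing.ofAssociativeRing

variable {K V : Type*} [Field K] [AddCommGroup V] [Module K V]

def NonUnitalSubalgebra.toLieSubalgebra (B : NonUnitalSubalgebra K (End K V)) :
    LieSubalgebra K (End K V) where
  toSubmodule := B.toSubmodule
  lie_mem' {x y} hx hy := by
    change x ∈ B at hx
    change y ∈ B at hy
    change x * y - y * x ∈ B
    exact sub_mem (mul_mem hx hy) (mul_mem hy hx)

theorem NonUnitalSubalgebra.exists_basis_mem_span_Iio_of_forall_isNilpotent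
    [FiniteDimensional K V] (B : NonUnitalSubalgebra K (End K V))
    (hB : ∀ x ∈ B, IsNilpotent x) :
    ∃ n, ∃ b : Basis (Fin n) K V, ∀ x ∈ B, ∀ j, x (b j) ∈ Submodule.span K (b '' Iio j) := by
  let L := B.toLieSubalgebra
  have : LieModule.IsNilpotent L V :=
    LieAlgebra.isEngelian_of_isNoetherian (R := K) (L := L) V fun x => by
      simpa [LieSubalgebra.toEnd_eq] using hB x x.2
  obtain ⟨n, b, hb⟩ := LieModule.exists_basis_lie_mem_span_Iio (K := K) (L := L) V
  exact ⟨n, b, fun x hx j => hb ⟨x, hx⟩ j⟩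

end

/-- Let `B ⊆ End(V)` be a (possibly non-unital) subalgebra of
endomorphisms of a finite-dimensional complex vector space `V` such that every
element of `B` has trace zero (in particular, since `B` is closed under
multiplication, all products of elements of `B` have trace zero).  Then every
element of `B` is nilpotent, and `B` is simultaneously strictly upper
triangularizable: there is a basis of `V` in which every element of `B` is a
strictly upper triangular matrix. -/
theorem trace_zero_nonunital_subalgebra_nilpotent_and_strictly_triangularizable
    {V : Type*} [AddCommGroup V] [Module ℂ V] [FiniteDimensional ℂ V]
    (B : NonUnitalSubalgebra ℂ (Module.End ℂ V))
    (htr : ∀ x ∈ B, LinearMap.trace ℂ V x = 0) :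
    (∀ x ∈ B, IsNilpotent x) ∧
    ∃ b : Module.Basis (Fin (Module.finrank ℂ V)) ℂ V,
      ∀ x ∈ B, ∀ i j : Fin (Module.finrank ℂ V), j ≤ i →
        LinearMap.toMatrix b b x i j = 0 := by
  have hnil (x : End ℂ V) (hx : x ∈ B) : IsNilpotent x :=
    End.isNilpotent_of_forall_trace_pow_succ_eq_zero fun k => htr _ (MulMemClass.pow_succ_mem hx k)
  obtain ⟨n, b, hb⟩ := B.exists_basis_mem_span_Iio_of_forall_isNilpotent hnil
  obtain rfl : finrank ℂ V = n := (finrank_eq_card_basis b).trans (Fintype.card_fin n)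
  exact ⟨hnil, b, fun x hx i j hij => b.toMatrix_eq_zero_of_mem_span_Iio (hb x hx) hij⟩
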